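/- For every ε ∈ (0,1) and every real d > 1, the probability that G^{bip}_{n,d} contains an independent set I with |I∩L| ≥ (1−ε)·(log d/d)·n and |I∩R| ≥ (1−ε)·d^{ε−1}·n tends to 1 as n → ∞. -/

import Mathlib

open MeasureTheory Real Filter

noncomputable section

/-- Bernoulli measure on `Bool` with success probability `p`. -/
def coin (p : ℝ) : Measure Bool :=
  ENNReal.ofReal p • Measure.dirac true + ENNReal.ofReal (1 - p) • Measure.dirac false

/-- The random bipartite graph `G^bip_{n,d}`, as a product (Bernoulli(d/n)) measure on
edge-indicator vectors indexed by the `n * n` possible edges. -/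
def edgeMeasure (n : ℕ) (d : ℝ) : Measure (Fin (n * n) → Bool) :=
  Measure.pi fun _ => coin (d / n)

/-- Vertex set: the left class `L` is `Sum.inl`, the right class `R` is `Sum.inr`. -/
abbrev Vtx (n : ℕ) := Fin n ⊕ Fin n

/-- Adjacency in the bipartite graph with edge-indicator vector `A`:
`i ∈ L` and `j ∈ R` are adjacent iff the indicator of the edge `(i,j)` is `true`. -/
def adjB (n : ℕ) (A : Fin (n * n) → Bool) : Vtx n → Vtx n → Prop
  | Sum.inl i, Sum.inr j => A (finProdFinEquiv (i, j)) = true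
  | Sum.inr j, Sum.inl i => A (finProdFinEquiv (i, j)) = true
  | _, _ => False

/-- `S` is an independent set of the bipartite graph encoded by `A`. -/
def IsIndepSet (n : ℕ) (A : Fin (n * n) → Bool) (S : Set (Vtx n)) : Prop :=
  ∀ u ∈ S, ∀ v ∈ S, ¬ adjB n A u v

/-- `S ∩ L`. -/
def leftPart {n : ℕ} (S : Set (Vtx n)) : Set (Vtx n) := S ∩ Set.range Sum.inl

/-- `S ∩ R`. -/
def rightPart {n : ℕ} (S : Set (Vtx n)) : Set (Vtx n) := S ∩ Set.range Sum.inr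

/-- `S` is `γ`-balanced: `| |S ∩ L| - γ|S| | < 1`. -/
def IsBalanced (γ : ℝ) {n : ℕ} (S : Set (Vtx n)) : Prop :=
  |((leftPart S).ncard : ℝ) - γ * (S.ncard : ℝ)| < 1

/-!
Take any set `X` of `k = ⌈β n⌉` left vertices, `β = (1 - ε) log d / d`; together with its common
non-neighbours on the right it is an independent set. A right vertex is a common non-neighbour of
`X` with probability `q = (1 - d / n) ^ k → exp (-β d) = d ^ (ε - 1)`, and these events are
mutually independent, being determined by disjoint sets of edges. By Chebyshev's inequality their
number falls below `(q - c) n` with probability at most `1 / (4 c² n)`; take `c = ε d ^ (ε - 1) / 2`.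
-/

open ProbabilityTheory Topology Finset

section Coin

variable {p : ℝ}

lemma isProbabilityMeasure_coin (hp0 : 0 ≤ p) (hp1 : p ≤ 1) : IsProbabilityMeasure (coin p) :=
  ⟨by simp [coin, ← ENNReal.ofReal_add hp0 (sub_nonneg.2 hp1)]⟩

lemma coin_singleton_false : coin p {false} = ENNReal.ofReal (1 - p) := by
  simp [coin]

variable {ι : Type*} [Fintype ι]

lemma pi_coin_forall_false (hp0 : 0 ≤ p) (hp1 : p ≤ 1) (K : Finset ι) :
    Measure.pi (fun _ : ι => coin p) {A | ∀ c ∈ K, A c = false}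
      = ENNReal.ofReal ((1 - p) ^ #K) := by
  have := isProbabilityMeasure_coin hp0 hp1
  classical
  have hbox : {A : ι → Bool | ∀ c ∈ K, A c = false}
      = Set.univ.pi fun c => if c ∈ (K : Set ι) then {false} else Set.univ := by
    rw [Set.pi_univ_ite]; ext A; simp
  rw [hbox, Measure.pi_pi, ENNReal.ofReal_pow (sub_nonneg.2 hp1), ← coin_singleton_false]
  simp only [Finset.mem_coe, apply_ite, measure_univ, Finset.prod_ite_mem, univ_inter, prod_const]

lemma iIndepSet_pi_coin_forall_false (hp0 : 0 ≤ p) (hp1 : p ≤ 1) {κ : Type*} {K : κ → Finset ι}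
    (hK : Pairwise (Function.onFun Disjoint K)) :
    iIndepSet (fun j => {A : ι → Bool | ∀ c ∈ K j, A c = false}) (Measure.pi fun _ => coin p) := by
  classical
  rw [iIndepSet_iff_meas_biInter fun _ => .of_discrete]
  intro s
  have hinter : ⋂ j ∈ s, {A : ι → Bool | ∀ c ∈ K j, A c = false}
      = {A | ∀ c ∈ s.biUnion K, A c = false} := by
    ext A
    simp only [Set.mem_iInter, Set.mem_ofPred_eq, mem_biUnion]
    grind
  simp_rw [hinter, pi_coin_forall_false hp0 hp1, card_biUnion (hK.set_pairwise _),
    ← prod_pow_eq_pow_sum]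
  rw [ENNReal.ofReal_prod_of_nonneg fun _ _ => pow_nonneg (sub_nonneg.2 hp1) _]

end Coin

section SecondMoment

variable {Ω κ : Type*} [MeasurableSpace Ω] {μ : Measure Ω} [IsProbabilityMeasure μ]
  [Fintype κ] [Nonempty κ]

lemma measure_ncard_mem_lt_le_of_iIndepSet {E : κ → Set Ω} (hE : ∀ j, MeasurableSet (E j))
    (hind : iIndepSet E μ) {q c : ℝ} (hc : 0 < c) (hq : ∀ j, q ≤ μ.real (E j)) :
    μ {ω | ({j | ω ∈ E j}.ncard : ℝ) < (q - c) * Fintype.card κ}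
      ≤ ENNReal.ofReal (1 / (4 * c ^ 2 * Fintype.card κ)) := by
  classical
  set n : ℝ := (Fintype.card κ : ℝ)
  set X : κ → Ω → ℝ := fun j => (E j).indicator 1
  set T : Ω → ℝ := ∑ j, X j
  have hX : ∀ j, MemLp (X j) 2 μ := fun j => memLp_indicator_const 2 (hE j) 1 (by simp)
  have hT : ∀ ω, T ω = {j | ω ∈ E j}.ncard := fun ω => by
    simp [T, X, Set.indicator_apply, Finset.sum_boole, Set.ncard_eq_toFinset_card']
  have hmean : q * n ≤ μ[T] :=
    calc q * n = ∑ _j : κ, q := by simp [n, mul_comm]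
      _ ≤ ∑ j, μ[X j] := by
        gcongr with j
        simpa [X, integral_indicator_one (hE j)] using hq j
      _ = μ[T] := by
        rw [← integral_finsetSum _ fun j _ => (hX j).integrable one_le_two]
        simp only [T, Finset.sum_apply]
  have hvar : variance T μ ≤ n / 4 := by
    rw [IndepFun.variance_sum (fun j _ => hX j)
      fun i _ j _ hij => (hind.iIndepFun_indicator).indepFun hij]
    calc ∑ j, variance (X j) μ ≤ ∑ _j : κ, ((1 - 0) / 2 : ℝ) ^ 2 := by
          gcongr with j
          refine variance_le_sq_of_bounded (.of_forall fun ω => ?_)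
            ((measurable_one.indicator (hE j)).aemeasurable)
          by_cases h : ω ∈ E j <;> simp [X, h]
      _ = n / 4 := by simp [n]; ring
  calc μ {ω | ({j | ω ∈ E j}.ncard : ℝ) < (q - c) * n}
      ≤ μ {ω | c * n ≤ |T ω - μ[T]|} := by
        refine measure_mono fun ω hω => ?_
        simp only [Set.mem_ofPred_eq, ← hT] at hω ⊢
        rw [abs_sub_comm, le_abs]; left; linarith
    _ ≤ ENNReal.ofReal (variance T μ / (c * n) ^ 2) :=
        meas_ge_le_variance_div_sq (memLp_finsetSum' _ fun j _ => hX j) (by positivity)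
    _ ≤ ENNReal.ofReal (1 / (4 * c ^ 2 * n)) := by
        refine ENNReal.ofReal_le_ofReal ?_
        calc variance T μ / (c * n) ^ 2 ≤ n / 4 / (c * n) ^ 2 := by gcongr
          _ = 1 / (4 * c ^ 2 * n) := by field_simp

end SecondMoment

section Bipartite

variable {n : ℕ}

lemma leftPart_inl_image_union_inr_image (X Y : Set (Fin n)) :
    leftPart (Sum.inl '' X ∪ Sum.inr '' Y) = Sum.inl '' X := by
  ext (i | j) <;> simp [leftPart]

lemma rightPart_inl_image_union_inr_image (X Y : Set (Fin n)) :
    rightPart (Sum.inl '' X ∪ Sum.inr '' Y) = Sum.inr '' Y := by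
  ext (i | j) <;> simp [rightPart]

lemma isIndepSet_inl_image_union_inr_image {A : Fin (n * n) → Bool} {X Y : Set (Fin n)}
    (h : ∀ i ∈ X, ∀ j ∈ Y, A (finProdFinEquiv (i, j)) = false) :
    IsIndepSet n A (Sum.inl '' X ∪ Sum.inr '' Y) := by
  rintro _ (⟨i, hi, rfl⟩ | ⟨j, hj, rfl⟩) _ (⟨i', hi', rfl⟩ | ⟨j', hj', rfl⟩)
  · simp [adjB]
  · simp [adjB, h i hi j' hj']
  · simp [adjB, h i' hi' j hj]
  · simp [adjB]

lemma exists_isIndepSet_ncard (A : Fin (n * n) → Bool) (X : Set (Fin n)) :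
    ∃ S : Set (Vtx n), IsIndepSet n A S ∧ (leftPart S).ncard = X.ncard ∧
      (rightPart S).ncard = {j | ∀ i ∈ X, A (finProdFinEquiv (i, j)) = false}.ncard :=
  ⟨Sum.inl '' X ∪ Sum.inr '' {j | ∀ i ∈ X, A (finProdFinEquiv (i, j)) = false},
    isIndepSet_inl_image_union_inr_image fun _ hi _ hj => hj _ hi,
    by rw [leftPart_inl_image_union_inr_image, Set.ncard_image_of_injective _ Sum.inl_injective],
    by rw [rightPart_inl_image_union_inr_image, Set.ncard_image_of_injective _ Sum.inr_injective]⟩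

lemma pi_coin_not_exists_isIndepSet_le [NeZero n] {k : ℕ} (hk : k ≤ n) {p c : ℝ} (hp0 : 0 ≤ p)
    (hp1 : p ≤ 1) (hc : 0 < c) :
    Measure.pi (fun _ : Fin (n * n) => coin p)
        {A | ¬ ∃ S : Set (Vtx n), IsIndepSet n A S ∧ (k : ℝ) ≤ (leftPart S).ncard ∧
          ((1 - p) ^ k - c) * n ≤ (rightPart S).ncard}
      ≤ ENNReal.ofReal (1 / (4 * c ^ 2 * n)) := by
  have := isProbabilityMeasure_coin hp0 hp1
  obtain ⟨X, -, hX⟩ := exists_subset_card_eq (s := (univ : Finset (Fin n))) (by simpa using hk)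
  set K : Fin n → Finset (Fin (n * n)) := fun j => X.image fun i => finProdFinEquiv (i, j)
  have hK : ∀ j, #(K j) = k := fun j => by
    rw [card_image_of_injective _ fun i i' h => by simpa using h, hX]
  have hdisj : Pairwise (Function.onFun Disjoint K) := fun j j' hjj' => by
    simp only [Function.onFun, K, disjoint_left, mem_image]
    rintro _ ⟨i, -, rfl⟩ ⟨i', -, h⟩
    simp_all
  have hE : ∀ (A : Fin (n * n) → Bool) j,
      (∀ c ∈ K j, A c = false) ↔ ∀ i ∈ (X : Set (Fin n)), A (finProdFinEquiv (i, j)) = false :=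
    fun A j => forall_mem_image
  calc _ ≤ Measure.pi (fun _ : Fin (n * n) => coin p)
        {A | ({j | A ∈ {A : Fin (n * n) → Bool | ∀ c ∈ K j, A c = false}}.ncard : ℝ)
          < ((1 - p) ^ k - c) * Fintype.card (Fin n)} := by
        refine measure_mono fun A hA => ?_
        simp only [Set.mem_ofPred_eq, hE, Fintype.card_fin] at hA ⊢
        by_contra! hlt
        obtain ⟨S, hS, hL, hR⟩ := exists_isIndepSet_ncard A X
        exact hA ⟨S, hS, by rw [hL, Set.ncard_coe_finset, hX], hR ▸ hlt⟩
    _ ≤ _ := by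
        refine measure_ncard_mem_lt_le_of_iIndepSet (fun _ => .of_discrete)
          (iIndepSet_pi_coin_forall_false hp0 hp1 hdisj) hc fun j => ?_
        rw [measureReal_def, pi_coin_forall_false hp0 hp1, hK,
          ENNReal.toReal_ofReal (pow_nonneg (sub_nonneg.2 hp1) _)]
    _ = _ := by rw [Fintype.card_fin]

end Bipartite

lemma tendsto_one_sub_div_pow_ceil_mul {β : ℝ} (hβ : 0 ≤ β) (d : ℝ) :
    Tendsto (fun n : ℕ => (1 - d / n) ^ ⌈β * n⌉₊) atTop (𝓝 (exp (-(β * d)))) := by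
  have hratio : Tendsto (fun n : ℕ => (⌈β * n⌉₊ : ℝ) / n) atTop (𝓝 β) :=
    (tendsto_nat_ceil_mul_div_atTop hβ).comp tendsto_natCast_atTop_atTop
  have hlog : Tendsto (fun n : ℕ => (n : ℝ) * log (1 + -d / n)) atTop (𝓝 (-d)) :=
    (tendsto_mul_log_one_add_div_atTop (-d)).comp tendsto_natCast_atTop_atTop
  rw [← mul_neg]
  refine ((continuous_exp.tendsto _).comp (hratio.mul hlog)).congr' ?_
  filter_upwards [eventually_gt_atTop ⌈d⌉₊] with n hn
  have hdn : d < n := (Nat.le_ceil d).trans_lt (by exact_mod_cast hn)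
  have hn0 : (0 : ℝ) < n := Nat.cast_pos.2 (Nat.zero_lt_of_lt hn)
  have hpos : 0 < 1 - d / n := by rwa [sub_pos, div_lt_one hn0]
  rw [Function.comp_apply, ← rpow_natCast, rpow_def_of_pos hpos, neg_div, ← sub_eq_add_neg]
  congr 1
  field_simp

lemma tendsto_measure_nhds_one_of_measure_compl_le {Ω : ℕ → Type*} [∀ n, MeasurableSpace (Ω n)]
    {μ : ∀ n, Measure (Ω n)} {s : ∀ n, Set (Ω n)} {b : ℕ → ENNReal}
    (hb : Tendsto b atTop (𝓝 0))
    (h : ∀ᶠ n in atTop, IsProbabilityMeasure (μ n) ∧ μ n (s n)ᶜ ≤ b n) :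
    Tendsto (fun n => μ n (s n)) atTop (𝓝 1) := by
  have hlower : Tendsto (fun n => 1 - b n) atTop (𝓝 1) := by
    simpa using ENNReal.Tendsto.sub tendsto_const_nhds hb (.inl ENNReal.one_ne_top)
  refine tendsto_of_tendsto_of_tendsto_of_le_of_le' hlower tendsto_const_nhds ?_ ?_
  · filter_upwards [h] with n hn
    have := hn.1
    calc 1 - b n ≤ 1 - μ n (s n)ᶜ := tsub_le_tsub_left hn.2 1
      _ ≤ μ n (s n) := tsub_le_iff_right.2 <| by
        simpa [Set.union_compl_self] using measure_union_le (μ := μ n) (s n) (s n)ᶜ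
  · filter_upwards [h] with n hn
    have := hn.1
    exact prob_le_one

lemma isProbabilityMeasure_edgeMeasure {n : ℕ} {d : ℝ} (hd0 : 0 ≤ d) (hdn : d ≤ n) :
    IsProbabilityMeasure (edgeMeasure n d) :=
  have := isProbabilityMeasure_coin (div_nonneg hd0 n.cast_nonneg)
    (div_le_one_of_le₀ hdn n.cast_nonneg)
  inferInstanceAs (IsProbabilityMeasure (Measure.pi _))

lemma edgeMeasure_compl_exists_isIndepSet_le {n : ℕ} [NeZero n] {d β t c : ℝ} (hd0 : 0 ≤ d)
    (hdn : d ≤ n) (hβ1 : β ≤ 1) (hc : 0 < c) (ht : t ≤ (1 - d / n) ^ ⌈β * n⌉₊ - c) :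
    edgeMeasure n d {A | ∃ S : Set (Vtx n), IsIndepSet n A S ∧
        β * n ≤ ((leftPart S).ncard : ℝ) ∧ t * n ≤ ((rightPart S).ncard : ℝ)}ᶜ
      ≤ ENNReal.ofReal (1 / (4 * c ^ 2 * n)) := by
  refine (measure_mono ?_).trans <| pi_coin_not_exists_isIndepSet_le
    (Nat.ceil_le.2 (mul_le_of_le_one_left n.cast_nonneg hβ1))
    (div_nonneg hd0 n.cast_nonneg) (div_le_one_of_le₀ hdn n.cast_nonneg) hc
  rintro A hA ⟨S, hS, hL, hR⟩
  exact hA ⟨S, hS, (Nat.le_ceil _).trans hL, le_trans (by gcongr) hR⟩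

/-- For every `ε ∈ (0,1)` and every real `d > 1`, the probability that
`G^bip_{n,d}` contains an independent set `I` with `|I∩L| ≥ (1−ε)·(log d/d)·n` and
`|I∩R| ≥ (1−ε)·d^{ε−1}·n` tends to `1` as `n → ∞`. -/
theorem stmt15 (ε : ℝ) (hε0 : 0 < ε) (hε1 : ε < 1) (d : ℝ) (hd : 1 < d) :
    Filter.Tendsto
      (fun n : ℕ => edgeMeasure n d
        {A | ∃ S : Set (Vtx n), IsIndepSet n A S ∧
          (1 - ε) * (Real.log d / d) * n ≤ ((leftPart S).ncard : ℝ) ∧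
          (1 - ε) * d ^ (ε - 1) * n ≤ ((rightPart S).ncard : ℝ)})
      Filter.atTop (nhds 1) := by
  have hd0 : 0 < d := one_pos.trans hd
  set β := (1 - ε) * (log d / d)
  have hβ0 : 0 ≤ β := mul_nonneg (by linarith) (div_nonneg (log_nonneg hd.le) hd0.le)
  have hβ1 : β ≤ 1 := by
    have : log d / d ≤ 1 := (div_le_one hd0).2 ((log_le_sub_one_of_pos hd0).trans (by linarith))
    nlinarith
  have hq : Tendsto (fun n : ℕ => (1 - d / n) ^ ⌈β * n⌉₊) atTop (𝓝 (d ^ (ε - 1))) := by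
    convert tendsto_one_sub_div_pow_ceil_mul hβ0 d using 2
    rw [rpow_def_of_pos hd0]
    simp only [β]
    field_simp
    ring_nf
  set c := ε / 2 * d ^ (ε - 1)
  have hc : 0 < c := by positivity
  have hgap : (1 - ε) * d ^ (ε - 1) < d ^ (ε - 1) - c := by
    have : 0 < d ^ (ε - 1) := by positivity
    simp only [c]
    nlinarith
  refine tendsto_measure_nhds_one_of_measure_compl_le
    (b := fun n : ℕ => ENNReal.ofReal (1 / (4 * c ^ 2 * n))) ?_ ?_
  · simpa using ENNReal.tendsto_ofReal ((tendsto_natCast_atTop_atTop.const_mul_atTop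
      (by positivity : (0 : ℝ) < 4 * c ^ 2)).inv_tendsto_atTop)
  · filter_upwards [(hq.sub_const c).eventually_const_lt hgap, eventually_ge_atTop ⌈d⌉₊,
      eventually_gt_atTop 0] with n hqn hdn hn
    have : NeZero n := ⟨hn.ne'⟩
    exact ⟨isProbabilityMeasure_edgeMeasure hd0.le (Nat.ceil_le.1 hdn),
      edgeMeasure_compl_exists_isIndepSet_le hd0.le (Nat.ceil_le.1 hdn) hβ1 hc hqn.le⟩
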